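/- Let B = B(0,1) ⊂ ℝ^n and let φ ∈ C_c^∞(B(0,2)) with 0 ≤ φ ≤ 3. For a smooth r-form ω on B (1 ≤ r ≤ n), define Tω(x) = ∫_B φ(y)(k_y ω)(x) dy, where k_y is the linear homotopy operator. Then there is a constant C(n, r) such that |Tω(x)| ≤ C(n,r) ∫_B |ω(y)| / |x - y|^{n-1} dy for all x ∈ B. -/

import Mathlib

open MeasureTheory

noncomputable section

/-- The averaged linear homotopy operator `Tω(x) = ∫_B φ(y) (k_y ω)(x) dy`, where
`(k_y ω)(x) = ∫_0^1 s^{r-1} ω(sx + (1-s)y) ⌟ (x - y) ds` and the form `ω` of degree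
`r = m + 1` is represented as a field of continuous multilinear maps. -/
def avgHomotopy {n m : ℕ} (φ : EuclideanSpace ℝ (Fin n) → ℝ)
    (Ω : EuclideanSpace ℝ (Fin n) →
      ContinuousMultilinearMap ℝ (fun _ : Fin (m + 1) => EuclideanSpace ℝ (Fin n)) ℝ)
    (x : EuclideanSpace ℝ (Fin n)) :
    ContinuousMultilinearMap ℝ (fun _ : Fin m => EuclideanSpace ℝ (Fin n)) ℝ :=
  ∫ y in Metric.ball (0 : EuclideanSpace ℝ (Fin n)) 1,
    φ y • ∫ s in Set.Ioc (0 : ℝ) 1,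
      s ^ m • ((Ω (s • x + (1 - s) • y)).curryLeft (x - y) :
        ContinuousMultilinearMap ℝ (fun _ : Fin m => EuclideanSpace ℝ (Fin n)) ℝ)

end

section AuxLemmas

open Metric Set ENNReal

lemma riesz_kernel_lt_top (n : ℕ) (hn : 2 ≤ n) (x : EuclideanSpace ℝ (Fin n)) :
    ∫⁻ z in ball x 2, ENNReal.ofReal (‖x - z‖ ^ (-((n : ℝ) - 1))) < ⊤ := by
  haveI : Nontrivial (EuclideanSpace ℝ (Fin n)) :=
    Module.nontrivial_of_finrank_pos (R := ℝ) (by rw [finrank_euclideanSpace_fin]; omega)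
  set p : ℝ := (n : ℝ) - 1 with hp
  have hp0 : 0 < p := by
    have : (2:ℝ) ≤ (n:ℝ) := by exact_mod_cast hn
    simp only [hp]; linarith
  set f : EuclideanSpace ℝ (Fin n) → ℝ≥0∞ := fun z => ENNReal.ofReal (‖x - z‖ ^ (-p)) with hf
  set A : ℕ → Set (EuclideanSpace ℝ (Fin n)) :=
    fun k => ball x (2 * (2:ℝ)⁻¹ ^ k) \ ball x (2 * (2:ℝ)⁻¹ ^ (k+1)) with hA
  have hsub : ball x 2 \ {x} ⊆ ⋃ k, A k := by
    intro z hz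
    obtain ⟨hz2, hzx⟩ := hz
    have hd0 : 0 < dist z x := dist_pos.2 hzx
    have hd2 : dist z x < 2 := mem_ball.1 hz2
    have hev : ∃ k : ℕ, ¬ dist z x < 2 * (2:ℝ)⁻¹ ^ k := by
      obtain ⟨k, hk⟩ := exists_pow_lt_of_lt_one (by positivity : (0:ℝ) < dist z x / 2)
        (by norm_num : (2:ℝ)⁻¹ < 1)
      exact ⟨k, by push_neg; nlinarith [hk]⟩
    have hK0 : Nat.find hev ≠ 0 := by
      intro h
      have := Nat.find_spec hev; rw [h] at this; simp at this; linarith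
    obtain ⟨k, hk⟩ := Nat.exists_eq_succ_of_ne_zero hK0
    have hlt : dist z x < 2 * (2:ℝ)⁻¹ ^ k := by
      by_contra h
      exact (Nat.find_min hev (by omega : k < Nat.find hev)) h
    have hge : 2 * (2:ℝ)⁻¹ ^ (k+1) ≤ dist z x := by
      have h2 := Nat.find_spec hev
      rw [hk] at h2; push_neg at h2; exact h2
    exact mem_iUnion.2 ⟨k, mem_ball.2 hlt, fun h => absurd (mem_ball.1 h) (not_lt.2 hge)⟩
  have hstep : ∫⁻ z in ball x 2, f z = ∫⁻ z in ball x 2 \ {x}, f z := by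
    refine (setLIntegral_congr ?_).symm
    exact diff_ae_eq_self.2 (measure_mono_null inter_subset_right (measure_singleton x))
  rw [hstep]
  have hV : volume (ball (0 : EuclideanSpace ℝ (Fin n)) 1) < ⊤ := measure_ball_lt_top
  set V := volume (ball (0 : EuclideanSpace ℝ (Fin n)) 1) with hVdef
  calc ∫⁻ z in ball x 2 \ {x}, f z
      ≤ ∫⁻ z in ⋃ k, A k, f z := lintegral_mono_set hsub
    _ ≤ ∑' k, ∫⁻ z in A k, f z := lintegral_iUnion_le _ _
    _ ≤ ∑' k, (ENNReal.ofReal ((2:ℝ)^n) * V) * ENNReal.ofReal ((2:ℝ)⁻¹ ^ k) := by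
        refine ENNReal.tsum_le_tsum fun k => ?_
        set r : ℝ := (2:ℝ)⁻¹ ^ k with hr
        have hr0 : 0 < r := by positivity
        have hbound : ∀ z ∈ A k, f z ≤ ENNReal.ofReal (r ^ (-p)) := by
          intro z hz
          have h1 : r ≤ ‖x - z‖ := by
            have h3 := hz.2
            rw [mem_ball, not_lt] at h3
            have h2 : 2 * (2:ℝ)⁻¹ ^ (k+1) = r := by rw [hr]; ring
            rw [dist_eq_norm] at h3
            rw [← norm_neg]; simpa [neg_sub] using h2 ▸ h3
          exact ofReal_le_ofReal (Real.rpow_le_rpow_of_nonpos hr0 h1 (by linarith))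
        have halg : r ^ (-p) * (2*r)^n = 2^n * r := by
          have h2 : r ^ (-p) * r ^ ((n:ℕ):ℝ) = r := by
            rw [← Real.rpow_add hr0]
            have he : -p + ((n:ℕ):ℝ) = 1 := by rw [hp]; ring
            rw [he, Real.rpow_one]
          calc r ^ (-p) * (2*r)^n = 2^n * (r^(-p) * r ^ ((n:ℕ):ℝ)) := by
                rw [mul_pow, Real.rpow_natCast]; ring
            _ = 2^n * r := by rw [h2]
        calc ∫⁻ z in A k, f z
            ≤ ∫⁻ _ in A k, ENNReal.ofReal (r ^ (-p)) :=
              setLIntegral_mono measurable_const hbound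
          _ = ENNReal.ofReal (r ^ (-p)) * volume (A k) := setLIntegral_const _ _
          _ ≤ ENNReal.ofReal (r ^ (-p)) * (ENNReal.ofReal ((2*r) ^ n) * V) := by
              gcongr
              calc volume (A k) ≤ volume (ball x (2 * r)) := measure_mono diff_subset
                _ = ENNReal.ofReal ((2*r) ^ n) * V := by
                    rw [Measure.addHaar_ball volume x (by positivity : (0:ℝ) ≤ 2*r),
                      finrank_euclideanSpace_fin]
          _ = ENNReal.ofReal (r ^ (-p) * (2*r)^n) * V := by
              rw [← mul_assoc, ← ENNReal.ofReal_mul (by positivity)]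
          _ = (ENNReal.ofReal ((2:ℝ)^n) * V) * ENNReal.ofReal ((2:ℝ)⁻¹ ^ k) := by
              rw [halg, ENNReal.ofReal_mul (by positivity)]
              rw [← hr]; ring
    _ = (ENNReal.ofReal ((2:ℝ)^n) * V) * ∑' k : ℕ, (ENNReal.ofReal (2:ℝ)⁻¹) ^ k := by
        simp_rw [ENNReal.ofReal_pow (by norm_num : (0:ℝ) ≤ 2⁻¹), ENNReal.tsum_mul_left]
    _ < ⊤ := by
        rw [ENNReal.tsum_geometric]
        refine ENNReal.mul_lt_top (ENNReal.mul_lt_top ofReal_lt_top hV) ?_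
        rw [ENNReal.inv_lt_top]
        have h5 : ENNReal.ofReal (2:ℝ)⁻¹ < 1 := by
          rw [← ENNReal.ofReal_one]
          exact (ENNReal.ofReal_lt_ofReal_iff_of_nonneg (by norm_num)).2 (by norm_num)
        exact tsub_pos_of_lt h5


lemma aux1d (n : ℕ) (hn : 2 ≤ n) {a : ℝ} (ha : 0 < a) :
    ∫⁻ s in Set.Ioo (0:ℝ) 1,
        {s : ℝ | a < 2*(1-s)}.indicator (fun s => ENNReal.ofReal (((1-s)^n)⁻¹)) s
      ≤ ENNReal.ofReal ((a/2) ^ (-((n:ℝ)-1))) := by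
  set b : ℝ := a / 2 with hb
  have hb0 : 0 < b := by positivity
  have hset : {s : ℝ | a < 2*(1-s)} = Iio (1 - b) := by
    ext s; simp only [mem_setOf_eq, mem_Iio, hb]; constructor <;> intro h <;> linarith
  rw [hset]
  by_cases hb1 : 1 ≤ b
  · -- indicator vanishes on Ioo 0 1
    have : ∀ s ∈ Ioo (0:ℝ) 1, (Iio (1-b)).indicator
        (fun s => ENNReal.ofReal (((1-s)^n)⁻¹)) s = 0 := by
      intro s hs
      apply indicator_of_notMem
      simp only [mem_Iio, not_lt]
      linarith [hs.1]
    rw [setLIntegral_congr_fun measurableSet_Ioo this]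
    simp
  · push_neg at hb1
    have key : ∫⁻ s in Ioo (0:ℝ) 1,
        (Iio (1-b)).indicator (fun s => ENNReal.ofReal (((1-s)^n)⁻¹)) s
        ≤ ∫⁻ s in Ioo (0:ℝ) (1-b), ENNReal.ofReal (((1-s)^n)⁻¹) := by
      rw [← lintegral_indicator measurableSet_Ioo, ← lintegral_indicator measurableSet_Ioo]
      refine lintegral_mono fun s => ?_
      by_cases h1 : s ∈ Ioo (0:ℝ) 1
      · rw [indicator_of_mem h1]
        by_cases h2 : s ∈ Iio (1-b)
        · rw [indicator_of_mem h2]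
          have : s ∈ Ioo (0:ℝ) (1-b) := ⟨h1.1, h2⟩
          rw [indicator_of_mem this]
        · rw [indicator_of_notMem h2]; exact zero_le
      · rw [indicator_of_notMem h1]; exact zero_le
    refine key.trans ?_
    have hcont : ContinuousOn (fun s : ℝ => (((1:ℝ)-s)^n)⁻¹) (Icc 0 (1-b)) := by
      apply ContinuousOn.inv₀
      · exact ((continuous_const.sub continuous_id).pow n).continuousOn
      · intro s hs
        have h0 : (0:ℝ) < 1 - s := by have := hs.2; linarith
        exact pow_ne_zero n h0.ne'
    have hint : IntegrableOn (fun s : ℝ => (((1:ℝ)-s)^n)⁻¹) (Ioo 0 (1-b)) := by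
      exact (hcont.integrableOn_Icc).mono_set Ioo_subset_Icc_self
    rw [← ofReal_integral_eq_lintegral_ofReal hint ?_]
    swap
    · filter_upwards [ae_restrict_mem measurableSet_Ioo] with s hs
      have h0 : (0:ℝ) < 1 - s := by linarith [hs.2]
      positivity
    apply ENNReal.ofReal_le_ofReal
    have h1b : (0:ℝ) ≤ 1 - b := by linarith
    have hIoo : ∫ s in Ioo (0:ℝ) (1-b), (((1:ℝ)-s)^n)⁻¹
        = ∫ s in (0:ℝ)..(1-b), (((1:ℝ)-s)^n)⁻¹ := by
      rw [intervalIntegral.integral_of_le h1b, integral_Ioc_eq_integral_Ioo]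
    rw [hIoo]
    have hcomp : ∫ s in (0:ℝ)..(1-b), (((1:ℝ)-s)^n)⁻¹
        = ∫ u in b..(1:ℝ), ((u:ℝ)^n)⁻¹ := by
      have := intervalIntegral.integral_comp_sub_left (a := 0) (b := 1-b)
        (fun u : ℝ => ((u:ℝ)^n)⁻¹) 1
      simpa using this
    rw [hcomp]
    have hzpow : ∀ u : ℝ, ((u:ℝ)^n)⁻¹ = u ^ (-(n:ℤ)) := by
      intro u; rw [zpow_neg, zpow_natCast]
    simp_rw [hzpow]
    rw [integral_zpow (Or.inr ⟨by omega, by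
        intro h
        rcases mem_uIcc.1 h with h' | h' <;> [linarith [h'.1]; linarith [h'.2]]⟩)]
    -- (1 ^ (-n+1) - b ^ (-n+1)) / (-n+1) ≤ b ^ (-(n-1))
    have hcast : ((-(n:ℤ) + 1 : ℤ) : ℝ) = 1 - (n:ℝ) := by push_cast; ring
    have hrpow : b ^ (-((n:ℝ)-1)) = b ^ (-(n:ℤ)+1) := by
      rw [← Real.rpow_intCast b (-(n:ℤ)+1), hcast]
      congr 1; ring
    rw [hrpow]
    set c : ℝ := b ^ (-(n:ℤ)+1) with hc
    have hc0 : 0 < c := zpow_pos hb0 _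
    have h1 : (1:ℝ) ^ (-(n:ℤ)+1) = 1 := one_zpow _
    have hcast2 : (((-(n:ℤ)) : ℤ) : ℝ) + 1 = 1 - (n:ℝ) := by push_cast; ring
    rw [h1, hcast2]
    have hn1 : (2:ℝ) ≤ (n:ℝ) := by exact_mod_cast hn
    rw [div_le_iff_of_neg (by linarith : 1 - (n:ℝ) < 0)]
    nlinarith


lemma core (n : ℕ) (hn : 2 ≤ n) (g : EuclideanSpace ℝ (Fin n) → ℝ≥0∞) (hg : Measurable g)
    (hgt : ∀ z, g z ≠ ⊤) (x : EuclideanSpace ℝ (Fin n))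
    (hx : x ∈ ball (0 : EuclideanSpace ℝ (Fin n)) 1) :
    (∫⁻ y in ball (0 : EuclideanSpace ℝ (Fin n)) 1,
        ∫⁻ s in Set.Ioc (0:ℝ) 1, g (s • x + (1-s) • y)) ≤
      ENNReal.ofReal ((2:ℝ) ^ ((n:ℝ)-1)) *
        ∫⁻ z in ball (0 : EuclideanSpace ℝ (Fin n)) 1,
          g z * ENNReal.ofReal (‖x - z‖ ^ (-((n:ℝ)-1))) := by
  haveI : Nontrivial (EuclideanSpace ℝ (Fin n)) :=
    Module.nontrivial_of_finrank_pos (R := ℝ) (by rw [finrank_euclideanSpace_fin]; omega)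
  set B : Set (EuclideanSpace ℝ (Fin n)) := ball (0 : EuclideanSpace ℝ (Fin n)) 1 with hB
  have hxn : ‖x‖ < 1 := mem_ball_zero_iff.1 hx
  set q : ℝ := (n:ℝ) - 1 with hq
  set D : ℝ → EuclideanSpace ℝ (Fin n) → ℝ≥0∞ :=
    fun s z => ({w : EuclideanSpace ℝ (Fin n) | w ∈ B ∧ ‖x - w‖ < 2*(1-s)}).indicator g z with hD
  have hSmeas : ∀ s : ℝ, MeasurableSet {w : EuclideanSpace ℝ (Fin n) | w ∈ B ∧ ‖x - w‖ < 2*(1-s)} := by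
    intro s
    have : {w : EuclideanSpace ℝ (Fin n) | w ∈ B ∧ ‖x - w‖ < 2*(1-s)} = B ∩ {w : EuclideanSpace ℝ (Fin n) | ‖x - w‖ < 2*(1-s)} := rfl
    rw [this]
    exact measurableSet_ball.inter
      (measurableSet_lt ((continuous_const.sub continuous_id).norm).measurable measurable_const)
  have hDmeas : ∀ s : ℝ, Measurable (D s) := fun s => hg.indicator (hSmeas s)
  -- Step A : Ioc → Ioo
  have hres : (volume : Measure ℝ).restrict (Set.Ioc (0:ℝ) 1)
      = (volume : Measure ℝ).restrict (Set.Ioo (0:ℝ) 1) :=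
    (Measure.restrict_congr_set Ioo_ae_eq_Ioc).symm
  simp_rw [hres]
  -- Step B : swap
  have hm1 : Measurable (Function.uncurry fun (y : EuclideanSpace ℝ (Fin n)) (s : ℝ) => g (s • x + (1-s) • y)) := by
    apply hg.comp
    exact ((continuous_snd.smul continuous_const).add
      ((continuous_const.sub continuous_snd).smul continuous_fst)).measurable
  rw [lintegral_lintegral_swap hm1.aemeasurable]
  -- key pointwise estimate in s
  have key : ∀ s ∈ Set.Ioo (0:ℝ) 1,
      (∫⁻ y in B, g (s • x + (1-s) • y)) ≤
        ENNReal.ofReal (((1-s)^n)⁻¹) * ∫⁻ z, D s z := by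
    intro s hs
    obtain ⟨hs0, hs1⟩ := hs
    have ht0 : (0:ℝ) < 1 - s := by linarith
    calc (∫⁻ y in B, g (s • x + (1-s) • y))
        = ∫⁻ y, B.indicator (fun y => g (s • x + (1-s) • y)) y :=
          (lintegral_indicator measurableSet_ball _).symm
      _ ≤ ∫⁻ y, D s (s • x + (1-s) • y) := by
          refine lintegral_mono fun y => ?_
          by_cases hy : y ∈ B
          · rw [Set.indicator_of_mem hy]
            apply le_of_eq
            show g _ = ({w : EuclideanSpace ℝ (Fin n) | w ∈ B ∧ ‖x - w‖ < 2*(1-s)}).indicator g _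
            rw [Set.indicator_of_mem]
            constructor
            · have hyn : ‖y‖ < 1 := mem_ball_zero_iff.1 hy
              have : ‖s • x + (1-s) • y‖ ≤ s * ‖x‖ + (1-s) * ‖y‖ := by
                refine (norm_add_le _ _).trans ?_
                rw [norm_smul, norm_smul, Real.norm_eq_abs, Real.norm_eq_abs,
                  abs_of_pos hs0, abs_of_pos ht0]
              have : ‖s • x + (1-s) • y‖ < 1 := by nlinarith
              exact mem_ball_zero_iff.2 this
            · have hxy : x - (s • x + (1-s) • y) = (1-s) • (x - y) := by
                module
              rw [hxy, norm_smul, Real.norm_eq_abs, abs_of_pos ht0]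
              have hyn : ‖y‖ < 1 := mem_ball_zero_iff.1 hy
              have : ‖x - y‖ < 2 := (norm_sub_le _ _).trans_lt (by linarith)
              calc (1-s) * ‖x - y‖ < (1-s) * 2 := by nlinarith
                _ = 2 * (1-s) := by ring
          · rw [Set.indicator_of_notMem hy]; exact zero_le
      _ = ∫⁻ w, D s (s • x + w) ∂(Measure.map (fun y : EuclideanSpace ℝ (Fin n) => (1-s) • y) volume) :=
          (lintegral_map ((hDmeas s).comp (measurable_const_add _))
            (measurable_id.const_smul (1-s))).symm
      _ = ENNReal.ofReal |(((1-s)^n)⁻¹)| * ∫⁻ w, D s (s • x + w) := by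
          rw [Measure.map_addHaar_smul volume ht0.ne', lintegral_smul_measure,
            finrank_euclideanSpace_fin, smul_eq_mul]
      _ = ENNReal.ofReal (((1-s)^n)⁻¹) * ∫⁻ z, D s z := by
          rw [lintegral_add_left_eq_self (D s) (s • x), abs_of_pos (by positivity)]
  calc (∫⁻ s in Set.Ioo (0:ℝ) 1, ∫⁻ y in B, g (s • x + (1-s) • y))
      ≤ ∫⁻ s in Set.Ioo (0:ℝ) 1, ENNReal.ofReal (((1-s)^n)⁻¹) * ∫⁻ z, D s z :=
        lintegral_mono_ae ((ae_restrict_mem measurableSet_Ioo).mono key)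
    _ = ∫⁻ s in Set.Ioo (0:ℝ) 1, ∫⁻ z, ENNReal.ofReal (((1-s)^n)⁻¹) * D s z := by
        refine lintegral_congr fun s => ?_
        rw [lintegral_const_mul' _ _ ofReal_ne_top]
    _ = ∫⁻ z, ∫⁻ s in Set.Ioo (0:ℝ) 1, ENNReal.ofReal (((1-s)^n)⁻¹) * D s z := by
        refine lintegral_lintegral_swap ?_
        have m1 : Measurable fun p : ℝ × EuclideanSpace ℝ (Fin n) => ENNReal.ofReal (((1-p.1)^n)⁻¹) :=
          ENNReal.measurable_ofReal.comp
            ((((continuous_const.sub continuous_fst).pow n).measurable).inv)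
        have hS : MeasurableSet {p : ℝ × EuclideanSpace ℝ (Fin n) | p.2 ∈ B ∧ ‖x - p.2‖ < 2*(1-p.1)} := by
          refine (measurable_snd measurableSet_ball).inter ?_
          exact measurableSet_lt ((continuous_const.sub continuous_snd).norm).measurable
            ((continuous_const.mul (continuous_const.sub continuous_fst)).measurable)
        have m2 : Measurable fun p : ℝ × EuclideanSpace ℝ (Fin n) => D p.1 p.2 := by
          have hfun : (fun p : ℝ × EuclideanSpace ℝ (Fin n) => D p.1 p.2) =
              ({p : ℝ × EuclideanSpace ℝ (Fin n) | p.2 ∈ B ∧ ‖x - p.2‖ < 2*(1-p.1)}).indicator (fun p => g p.2) := by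
            funext p
            simp only [hD]
            by_cases h : p.2 ∈ B ∧ ‖x - p.2‖ < 2 * (1 - p.1)
            · rw [Set.indicator_of_mem (show p.2 ∈ {w : EuclideanSpace ℝ (Fin n) | w ∈ B ∧ ‖x - w‖ < 2*(1-p.1)} from h),
                Set.indicator_of_mem (show p ∈ {p : ℝ × EuclideanSpace ℝ (Fin n) | p.2 ∈ B ∧ ‖x - p.2‖ < 2*(1-p.1)} from h)]
            · rw [Set.indicator_of_notMem (show p.2 ∉ {w : EuclideanSpace ℝ (Fin n) | w ∈ B ∧ ‖x - w‖ < 2*(1-p.1)} from h),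
                Set.indicator_of_notMem (show p ∉ {p : ℝ × EuclideanSpace ℝ (Fin n) | p.2 ∈ B ∧ ‖x - p.2‖ < 2*(1-p.1)} from h)]
          rw [hfun]
          exact (hg.comp measurable_snd).indicator hS
        exact (m1.mul m2).aemeasurable
    _ = ∫⁻ z, (B.indicator g z) *
          ∫⁻ s in Set.Ioo (0:ℝ) 1,
            ({s : ℝ | ‖x - z‖ < 2*(1-s)}).indicator (fun s => ENNReal.ofReal (((1-s)^n)⁻¹)) s := by
        refine lintegral_congr fun z => ?_
        have hbz : B.indicator g z ≠ ⊤ := by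
          by_cases hz : z ∈ B
          · rw [Set.indicator_of_mem hz]; exact hgt z
          · rw [Set.indicator_of_notMem hz]; exact zero_ne_top
        rw [← lintegral_const_mul' _ _ hbz]
        refine lintegral_congr fun s => ?_
        simp only [hD]
        by_cases hz : z ∈ B
        · by_cases hlt : ‖x - z‖ < 2*(1-s)
          · rw [Set.indicator_of_mem
                (show z ∈ {w : EuclideanSpace ℝ (Fin n) | w ∈ B ∧ ‖x - w‖ < 2*(1-s)} from ⟨hz, hlt⟩),
              Set.indicator_of_mem hz,
              Set.indicator_of_mem (show s ∈ {s : ℝ | ‖x - z‖ < 2*(1-s)} from hlt), mul_comm]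
          · rw [Set.indicator_of_notMem
                (show z ∉ {w : EuclideanSpace ℝ (Fin n) | w ∈ B ∧ ‖x - w‖ < 2*(1-s)} from fun hc => hlt hc.2),
              Set.indicator_of_notMem (show s ∉ {s : ℝ | ‖x - z‖ < 2*(1-s)} from hlt), mul_zero, mul_zero]
        · rw [Set.indicator_of_notMem
              (show z ∉ {w : EuclideanSpace ℝ (Fin n) | w ∈ B ∧ ‖x - w‖ < 2*(1-s)} from fun hc => hz hc.1),
            Set.indicator_of_notMem hz, mul_zero, zero_mul]
    _ ≤ ∫⁻ z, (B.indicator g z) * ENNReal.ofReal ((‖x - z‖/2) ^ (-q)) := by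
        have hae : ∀ᵐ z : EuclideanSpace ℝ (Fin n) ∂volume, z ≠ x := by
          refine ae_iff.2 ?_
          simp only [ne_eq, not_not, setOf_eq_eq_singleton]
          exact measure_singleton x
        refine lintegral_mono_ae (hae.mono fun z hz => ?_)
        have ha : 0 < ‖x - z‖ := by
          rw [norm_pos_iff, sub_ne_zero]
          exact fun h => hz h.symm
        exact mul_le_mul_right (aux1d n hn ha) _
    _ = ∫⁻ z in B, g z * ENNReal.ofReal ((‖x - z‖/2) ^ (-q)) := by
        rw [← lintegral_indicator measurableSet_ball]
        refine lintegral_congr fun z => ?_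
        by_cases hz : z ∈ B <;>
          simp [Set.indicator_of_mem, Set.indicator_of_notMem, hz, ← hB]
    _ = ENNReal.ofReal ((2:ℝ) ^ q) * ∫⁻ z in B, g z * ENNReal.ofReal (‖x - z‖ ^ (-q)) := by
        rw [← lintegral_const_mul' _ _ ofReal_ne_top]
        refine lintegral_congr fun z => ?_
        have h2 : (‖x - z‖/2) ^ (-q) = (2:ℝ) ^ q * ‖x - z‖ ^ (-q) := by
          rw [div_eq_mul_inv, Real.mul_rpow (norm_nonneg _) (by norm_num),
            Real.inv_rpow (by norm_num), ← Real.rpow_neg (by norm_num), neg_neg]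
          ring
        rw [h2, ENNReal.ofReal_mul (by positivity)]
        ring


end AuxLemmas

open Metric Set ENNReal in
set_option maxHeartbeats 1000000 in
theorem avgHomotopy_pointwise_bound (n m : ℕ) (hmn : m + 1 ≤ n) (hn : 2 ≤ n) :
    ∃ C : ℝ, 0 < C ∧
      ∀ (φ : EuclideanSpace ℝ (Fin n) → ℝ), ContDiff ℝ (⊤ : ℕ∞) φ → HasCompactSupport φ →
        tsupport φ ⊆ Metric.ball (0 : EuclideanSpace ℝ (Fin n)) 2 →
        (∀ y, 0 ≤ φ y) → (∀ y, φ y ≤ 3) →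
      ∀ (Ω : EuclideanSpace ℝ (Fin n) →
          ContinuousMultilinearMap ℝ (fun _ : Fin (m + 1) => EuclideanSpace ℝ (Fin n)) ℝ),
        ContDiff ℝ (⊤ : ℕ∞) Ω →
        (∀ x (v : Fin (m + 1) → EuclideanSpace ℝ (Fin n)) (i j : Fin (m + 1)),
          i ≠ j → v i = v j → Ω x v = 0) →
      ∀ x ∈ Metric.ball (0 : EuclideanSpace ℝ (Fin n)) 1,
        ‖avgHomotopy φ Ω x‖ ≤
          C * ∫ y in Metric.ball (0 : EuclideanSpace ℝ (Fin n)) 1,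
                ‖Ω y‖ / ‖x - y‖ ^ (n - 1 : ℝ) := by
  refine ⟨6 * 2 ^ n, by positivity, ?_⟩
  intro φ hφsm hφsupp hφss hφ0 hφ3 Ω hΩ hΩalt x hx
  set B : Set (EuclideanSpace ℝ (Fin n)) := ball (0 : EuclideanSpace ℝ (Fin n)) 1 with hB
  have hxn : ‖x‖ < 1 := mem_ball_zero_iff.1 hx
  set q : ℝ := (n : ℝ) - 1 with hq
  have hq0 : 0 < q := by
    have : (2:ℝ) ≤ (n:ℝ) := by exact_mod_cast hn
    simp only [hq]; linarith
  set I : EuclideanSpace ℝ (Fin n) →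
      ContinuousMultilinearMap ℝ (fun _ : Fin m => EuclideanSpace ℝ (Fin n)) ℝ :=
    fun y => ∫ s in Set.Ioc (0 : ℝ) 1,
      s ^ m • ((Ω (s • x + (1 - s) • y)).curryLeft (x - y) :
        ContinuousMultilinearMap ℝ (fun _ : Fin m => EuclideanSpace ℝ (Fin n)) ℝ) with hI
  have hΩc : Continuous Ω := hΩ.continuous
  set g : EuclideanSpace ℝ (Fin n) → ℝ≥0∞ := fun z => (‖Ω z‖₊ : ℝ≥0∞) with hg
  have hgm : Measurable g := (ENNReal.continuous_coe.comp hΩc.nnnorm).measurable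
  -- pointwise bound on the inner integral
  have hpt : ∀ y ∈ B, ENNReal.ofReal ‖φ y • I y‖ ≤
      6 * ∫⁻ s in Set.Ioc (0:ℝ) 1, g (s • x + (1-s) • y) := by
    intro y hy
    have hyn : ‖y‖ < 1 := mem_ball_zero_iff.1 hy
    have h1 : ‖φ y • I y‖ ≤ 3 * ‖I y‖ := by
      refine (norm_smul_le (φ y) (I y)).trans ?_
      rw [Real.norm_eq_abs, abs_of_nonneg (hφ0 y)]
      exact mul_le_mul_of_nonneg_right (hφ3 y) (norm_nonneg _)
    have hcontp : Continuous fun s : ℝ => s • x + (1-s) • y :=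
      (continuous_id.smul continuous_const).add
        ((continuous_const.sub continuous_id).smul continuous_const)
    calc ENNReal.ofReal ‖φ y • I y‖ ≤ ENNReal.ofReal (3 * ‖I y‖) := ENNReal.ofReal_le_ofReal h1
      _ = 3 * ENNReal.ofReal ‖I y‖ := by
          rw [ENNReal.ofReal_mul (by norm_num)]
          norm_num
      _ ≤ 3 * ∫⁻ s in Set.Ioc (0:ℝ) 1,
            (‖s ^ m • ((Ω (s • x + (1-s) • y)).curryLeft (x - y) :
              ContinuousMultilinearMap ℝ (fun _ : Fin m => EuclideanSpace ℝ (Fin n)) ℝ)‖₊ : ℝ≥0∞) := by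
          refine mul_le_mul_right ?_ 3
          rw [ofReal_norm]
          exact enorm_integral_le_lintegral_enorm _
      _ ≤ 3 * ∫⁻ s in Set.Ioc (0:ℝ) 1, 2 * g (s • x + (1-s) • y) := by
          refine mul_le_mul_right (setLIntegral_mono (((ENNReal.continuous_coe.comp (hΩc.comp hcontp).nnnorm).measurable).const_mul 2) ?_) 3
          intro s hs
          set p := s • x + (1-s) • y with hp
          have e2 : |s ^ m| ≤ 1 := by
            rw [abs_of_nonneg (pow_nonneg hs.1.le m)]
            exact pow_le_one₀ hs.1.le hs.2
          have e3 : ‖(Ω p).curryLeft (x - y)‖ ≤ ‖Ω p‖ * ‖x - y‖ := by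
            calc ‖(Ω p).curryLeft (x - y)‖ ≤ ‖(Ω p).curryLeft‖ * ‖x - y‖ :=
                  (Ω p).curryLeft.le_opNorm _
              _ = ‖Ω p‖ * ‖x - y‖ := by rw [ContinuousMultilinearMap.curryLeft_norm]
          have e4 : ‖x - y‖ ≤ 2 := (norm_sub_le _ _).trans (by linarith)
          have hTb : ‖s ^ m • ((Ω p).curryLeft (x - y) :
              ContinuousMultilinearMap ℝ (fun _ : Fin m => EuclideanSpace ℝ (Fin n)) ℝ)‖
              ≤ 2 * ‖Ω p‖ := by
            refine (norm_smul_le _ _).trans ?_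
            rw [Real.norm_eq_abs]
            nlinarith [norm_nonneg ((Ω p).curryLeft (x - y) :
              ContinuousMultilinearMap ℝ (fun _ : Fin m => EuclideanSpace ℝ (Fin n)) ℝ),
              norm_nonneg (Ω p)]
          calc (‖s ^ m • ((Ω p).curryLeft (x - y) :
                ContinuousMultilinearMap ℝ (fun _ : Fin m => EuclideanSpace ℝ (Fin n)) ℝ)‖₊ : ℝ≥0∞)
              = ENNReal.ofReal ‖s ^ m • ((Ω p).curryLeft (x - y) :
                ContinuousMultilinearMap ℝ (fun _ : Fin m => EuclideanSpace ℝ (Fin n)) ℝ)‖ :=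
                (ofReal_norm _).symm
            _ ≤ ENNReal.ofReal (2 * ‖Ω p‖) := ENNReal.ofReal_le_ofReal hTb
            _ = 2 * g p := by
                rw [ENNReal.ofReal_mul (by norm_num), ofReal_norm, enorm_eq_nnnorm]
                norm_num
                rfl
      _ = 6 * ∫⁻ s in Set.Ioc (0:ℝ) 1, g (s • x + (1-s) • y) := by
          rw [lintegral_const_mul' 2 _ (by norm_num), ← mul_assoc]
          norm_num
  -- the real Riesz potential
  set h : EuclideanSpace ℝ (Fin n) → ℝ := fun z => ‖Ω z‖ / ‖x - z‖ ^ q with hh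
  have hdivmul : ∀ z, h z = ‖Ω z‖ * ‖x - z‖ ^ (-q) := by
    intro z
    simp only [hh]
    rw [Real.rpow_neg (norm_nonneg _), div_eq_mul_inv]
  have hknorm : Continuous fun z : EuclideanSpace ℝ (Fin n) => ‖x - z‖ :=
    (continuous_const.sub continuous_id).norm
  have hkmeas : Measurable fun z : EuclideanSpace ℝ (Fin n) =>
      ENNReal.ofReal (‖x - z‖ ^ (-q)) := by
    have : (fun z : EuclideanSpace ℝ (Fin n) => ENNReal.ofReal (‖x - z‖ ^ (-q)))
        = fun z => ENNReal.ofReal ((‖x - z‖ ^ q)⁻¹) := by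
      funext z; rw [Real.rpow_neg (norm_nonneg _)]
    rw [this]
    exact ENNReal.measurable_ofReal.comp
      ((hknorm.rpow_const (fun z => Or.inr hq0.le)).measurable.inv)
  have hBsub : B ⊆ ball x 2 := by
    intro z hz
    have := mem_ball_zero_iff.1 hz
    rw [mem_ball, dist_eq_norm]
    calc ‖z - x‖ ≤ ‖z‖ + ‖x‖ := norm_sub_le _ _
      _ < 2 := by linarith
  obtain ⟨M, hM⟩ := (isCompact_closedBall (0 : EuclideanSpace ℝ (Fin n)) 1).exists_bound_of_continuousOn
      (hΩc.norm.continuousOn)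
  have hM0 : 0 ≤ M := by
    have := hM 0 (mem_closedBall_self (by norm_num))
    exact (norm_nonneg _).trans (by simpa using this)
  have hint : IntegrableOn h B := by
    constructor
    · exact ((hΩc.norm.measurable).div
        ((hknorm.rpow_const (fun z => Or.inr hq0.le)).measurable)).aestronglyMeasurable
    · rw [hasFiniteIntegral_iff_norm]
      calc ∫⁻ z in B, ENNReal.ofReal ‖h z‖
          ≤ ∫⁻ z in B, ENNReal.ofReal M * ENNReal.ofReal (‖x - z‖ ^ (-q)) := by
            refine setLIntegral_mono (hkmeas.const_mul _) ?_
            intro z hz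
            rw [hdivmul z, Real.norm_eq_abs, abs_of_nonneg (by positivity)]
            rw [← ENNReal.ofReal_mul hM0]
            refine ENNReal.ofReal_le_ofReal ?_
            have hzM : ‖Ω z‖ ≤ M := by
              have := hM z (ball_subset_closedBall hz)
              simpa using this
            have : (0:ℝ) ≤ ‖x - z‖ ^ (-q) := Real.rpow_nonneg (norm_nonneg _) _
            nlinarith
        _ = ENNReal.ofReal M * ∫⁻ z in B, ENNReal.ofReal (‖x - z‖ ^ (-q)) :=
            lintegral_const_mul' _ _ ENNReal.ofReal_ne_top
        _ ≤ ENNReal.ofReal M * ∫⁻ z in ball x 2, ENNReal.ofReal (‖x - z‖ ^ (-q)) :=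
            mul_le_mul_right (lintegral_mono_set hBsub) _
        _ < ⊤ := ENNReal.mul_lt_top ENNReal.ofReal_lt_top (riesz_kernel_lt_top n hn x)
  have hnn : 0 ≤ᵐ[volume.restrict B] h :=
    Filter.Eventually.of_forall fun z => by positivity
  have hEq : (∫⁻ z in B, g z * ENNReal.ofReal (‖x - z‖ ^ (-q)))
      = ENNReal.ofReal (∫ z in B, h z) := by
    rw [ofReal_integral_eq_lintegral_ofReal hint hnn]
    refine lintegral_congr fun z => ?_
    rw [hdivmul z, ENNReal.ofReal_mul (norm_nonneg _), ofReal_norm, enorm_eq_nnnorm]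
  have hIreal0 : 0 ≤ ∫ z in B, h z :=
    setIntegral_nonneg measurableSet_ball fun z _ => by positivity
  -- main chain
  have hmain : (∫⁻ y in B, ENNReal.ofReal ‖φ y • I y‖)
      ≤ 6 * (ENNReal.ofReal ((2:ℝ) ^ q) * ENNReal.ofReal (∫ z in B, h z)) := by
    calc (∫⁻ y in B, ENNReal.ofReal ‖φ y • I y‖)
        ≤ ∫⁻ y in B, 6 * ∫⁻ s in Set.Ioc (0:ℝ) 1, g (s • x + (1-s) • y) :=
          lintegral_mono_ae ((ae_restrict_mem measurableSet_ball).mono hpt)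
      _ = 6 * ∫⁻ y in B, ∫⁻ s in Set.Ioc (0:ℝ) 1, g (s • x + (1-s) • y) :=
          lintegral_const_mul' _ _ (by norm_num)
      _ ≤ 6 * (ENNReal.ofReal ((2:ℝ) ^ q) *
            ∫⁻ z in B, g z * ENNReal.ofReal (‖x - z‖ ^ (-q))) :=
          mul_le_mul_right (core n hn g hgm (fun z => ENNReal.coe_ne_top) x hx) 6
      _ = 6 * (ENNReal.ofReal ((2:ℝ) ^ q) * ENNReal.ofReal (∫ z in B, h z)) := by rw [hEq]
  have hfin : (6 : ℝ≥0∞) * (ENNReal.ofReal ((2:ℝ) ^ q) * ENNReal.ofReal (∫ z in B, h z)) ≠ ⊤ :=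
    ENNReal.mul_ne_top (by norm_num)
      (ENNReal.mul_ne_top ENNReal.ofReal_ne_top ENNReal.ofReal_ne_top)
  calc ‖avgHomotopy φ Ω x‖
      ≤ (∫⁻ y in B, ENNReal.ofReal ‖φ y • I y‖).toReal := by
        apply norm_integral_le_lintegral_norm
    _ ≤ ((6 : ℝ≥0∞) * (ENNReal.ofReal ((2:ℝ) ^ q) * ENNReal.ofReal (∫ z in B, h z))).toReal :=
        ENNReal.toReal_mono hfin hmain
    _ = 6 * ((2:ℝ) ^ q * ∫ z in B, h z) := by
        rw [ENNReal.toReal_mul, ENNReal.toReal_mul, ENNReal.toReal_ofReal (by positivity),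
          ENNReal.toReal_ofReal hIreal0]
        norm_num
    _ ≤ (6 * 2 ^ n) * ∫ z in B, h z := by
        have h2q : (2:ℝ) ^ q ≤ 2 ^ n := by
          calc (2:ℝ) ^ q ≤ (2:ℝ) ^ (n:ℝ) :=
                Real.rpow_le_rpow_of_exponent_le (by norm_num) (by simp only [hq]; linarith)
            _ = 2 ^ n := Real.rpow_natCast 2 n
        nlinarith [hIreal0, mul_le_mul_of_nonneg_right h2q hIreal0]
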